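/- (Merging a perfect chain preserves supported matches) Let a = ([q_s..q_e],[t_s..t_e]) and a' = ([q_s'..q_e'],[t_s'..t_e']) be anchors with a ≺ a' and connect(a,a') = 0, and let a·a' := ([q_s..q_e'],[t_s..t_e']). Then the set of character-match position pairs supported by a·a' equals the union of the set supported by a and the set supported by a'. -/
import Mathlib


/-- An anchor: a pair of integer intervals `([qs..qe],[ts..te])`. -/
structure Anchor where
  qs : ℤ
  qe : ℤ
  ts : ℤ
  te : ℤ
deriving DecidableEq

/-- `a` is a well-formed anchor: nonempty intervals satisfying the
    exact-match invariant `qe - qs = te - ts`. -/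
def Anchor.Valid (a : Anchor) : Prop :=
  a.qs ≤ a.qe ∧ a.ts ≤ a.te ∧ a.qe - a.qs = a.te - a.ts

/-- Strict precedence `a ≺ a'`. -/
def strictPrec (a a' : Anchor) : Prop :=
  a.qs ≤ a'.qs ∧ a.qe ≤ a'.qe ∧ a.ts ≤ a'.ts ∧ a.te ≤ a'.te ∧
    (a.qs < a'.qs ∨ a.qe < a'.qe ∨ a.ts < a'.ts ∨ a.te < a'.te)

/-- Weak precedence `a ≺_w a'`. -/
def weakPrec (a a' : Anchor) : Prop :=
  a.qs ≤ a'.qs ∧ a.ts ≤ a'.ts ∧ (a.qs < a'.qs ∨ a.ts < a'.ts)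

/-- Strong (ChainX) precedence `a ≺_X a'`. -/
def chainxPrec (a a' : Anchor) : Prop :=
  a.qs < a'.qs ∧ a.qe < a'.qe ∧ a.ts < a'.ts ∧ a.te < a'.te

/-- Gap cost `gap(a,a') = max(0, qs' - qe - 1, ts' - te - 1)`. -/
def gapCost (a a' : Anchor) : ℤ :=
  max 0 (max (a'.qs - a.qe - 1) (a'.ts - a.te - 1))

/-- Overlap cost `o(a,a') = |max(0, qe - qs' + 1) - max(0, te - ts' + 1)|`. -/
def ovCost (a a' : Anchor) : ℤ :=
  |max 0 (a.qe - a'.qs + 1) - max 0 (a.te - a'.ts + 1)|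

/-- `connect(a,a') = gap(a,a') + o(a,a')`. -/
def connectCost (a a' : Anchor) : ℤ := gapCost a a' + ovCost a a'

/-- The diagonal of an anchor: `diag(a) = qs - ts`. -/
def Anchor.diag (a : Anchor) : ℤ := a.qs - a.ts


/-- The set of character-match position pairs supported by an anchor. -/
def supports (a : Anchor) : Set (ℤ × ℤ) :=
  {p | ∃ k : ℤ, 0 ≤ k ∧ k ≤ a.te - a.ts ∧ p = (a.qs + k, a.ts + k)}

/-- Merging a perfect chain preserves the supported character matches. -/
theorem merge_perfect_chain_supports (a a' : Anchor)
    (ha : a.Valid) (ha' : a'.Valid)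
    (hprec : strictPrec a a') (hconn : connectCost a a' = 0) :
    supports ⟨a.qs, a'.qe, a.ts, a'.te⟩ = supports a ∪ supports a' := by
  obtain ⟨hq, ht, hd⟩ := ha
  obtain ⟨hq', ht', hd'⟩ := ha'
  obtain ⟨p1, p2, p3, p4, _⟩ := hprec
  have key : a'.qs - a.qs = a'.ts - a.ts ∧ a'.ts ≤ a.te + 1 := by
    unfold connectCost gapCost ovCost at hconn
    rcases abs_cases (max 0 (a.qe - a'.qs + 1) - max 0 (a.te - a'.ts + 1)) with ⟨h1, h2⟩ | ⟨h1, h2⟩ <;>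
      rw [h1] at hconn <;> omega
  obtain ⟨k1, k2⟩ := key
  ext ⟨x, y⟩
  simp only [supports, Set.mem_union, Set.mem_setOf_eq, Prod.mk.injEq]
  constructor
  · rintro ⟨k, hk0, hk1, hx, hy⟩
    by_cases h : k ≤ a.te - a.ts
    · exact Or.inl ⟨k, hk0, h, hx, hy⟩
    · exact Or.inr ⟨k - (a'.ts - a.ts), by omega, by omega, by omega, by omega⟩
  · rintro (⟨k, hk0, hk1, hx, hy⟩ | ⟨k, hk0, hk1, hx, hy⟩)
    · exact ⟨k, hk0, by omega, hx, hy⟩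
    · exact ⟨k + (a'.ts - a.ts), by omega, by omega, by omega, by omega⟩
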